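/- Let σ and τ be protagonist strategies in an initialized generalised safety/reachability game with initial vertex v₀. If σ is preadmissible and σ ⪯ τ, then aVal(v₀, σ) = aVal(v₀, τ) and cVal(v₀, σ) = cVal(v₀, τ). -/

import Mathlib

open scoped Classical

/-- A generalised safety/reachability game: a finite directed graph where every vertex has a
successor, a set `protag` of protagonist vertices (the rest belong to the antagonist), a set
`leaf` of leaves (each equipped with exactly a self-loop), an integer payoff attached to each
leaf, and an initial vertex `v0`. -/
structure GSRGame where
  V : Type
  fin : Finite V
  E : V → V → Prop
  succ_exists : ∀ v : V, ∃ w : V, E v w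
  protag : V → Prop
  leaf : V → Prop
  leaf_loop : ∀ v w : V, leaf v → (E v w ↔ w = v)
  pay : V → ℤ
  v0 : V

namespace GSRGame

variable (g : GSRGame)

/-- A strategy: to each nonempty history it assigns a successor of the last vertex.
(A protagonist strategy is only ever consulted at histories ending in a protagonist vertex,
an antagonist strategy at histories ending in an antagonist vertex.) -/
structure Strat where
  act : List g.V → g.V
  valid : ∀ (h : List g.V) (hne : h ≠ []), g.E (h.getLast hne) (act h)

/-- One step of the play extending history `h`: the protagonist moves according to `σ` at
protagonist vertices, the antagonist according to `τ` elsewhere. -/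
noncomputable def step (σ τ : g.Strat) (h : List g.V) : List g.V :=
  h ++ [if g.protag (h.getLastD g.v0) then σ.act h else τ.act h]

/-- The history obtained after `k` steps of play by `(σ, τ)` extending `h`. -/
noncomputable def playList (σ τ : g.Strat) (h : List g.V) : ℕ → List g.V
  | 0 => h
  | k + 1 => g.step σ τ (playList σ τ h k)

/-- The outcome (infinite path) induced by `(σ, τ)` from the history `h`. -/
noncomputable def play (σ τ : g.Strat) (h : List g.V) (k : ℕ) : g.V :=
  (g.playList σ τ h k).getLastD g.v0

/-- The payoff of an outcome: the payoff of the leaf it reaches, and `0` if it reaches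
no leaf. -/
noncomputable def payoffOf (ρ : ℕ → g.V) : ℤ :=
  if hx : ∃ k : ℕ, g.leaf (ρ k) then g.pay (ρ (Nat.find hx)) else 0

/-- The payoff `p(h, σ, τ)` of the outcome induced by `(σ, τ)` from the history `h`. -/
noncomputable def pval (σ τ : g.Strat) (h : List g.V) : ℤ :=
  g.payoffOf (g.play σ τ h)

/-- `h` is a history (a nonempty path starting at `v0`) compatible with the protagonist
strategy `σ`: every protagonist move along `h` agrees with `σ`. -/
def Compat (σ : g.Strat) (h : List g.V) : Prop :=
  h ≠ [] ∧ h.head? = some g.v0 ∧ List.Chain' g.E h ∧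
    ∀ (p : List g.V) (v : g.V), (p ++ [v]) <+: h → p ≠ [] →
      g.protag (p.getLastD g.v0) → σ.act p = v

/-- The cooperative value `cVal(h, σ)`. -/
noncomputable def cVal (σ : g.Strat) (h : List g.V) : ℤ :=
  sSup {z : ℤ | ∃ τ : g.Strat, z = g.pval σ τ h}

/-- The antagonistic value `aVal(h, σ)`. -/
noncomputable def aVal (σ : g.Strat) (h : List g.V) : ℤ :=
  sInf {z : ℤ | ∃ τ : g.Strat, z = g.pval σ τ h}

/-- The antagonistic value `aVal(h)` of a history. -/
noncomputable def aValH (h : List g.V) : ℤ :=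
  sSup {z : ℤ | ∃ σ : g.Strat, z = g.aVal σ h}

/-- The antagonistic-cooperative value `acVal(h)` of a history. -/
noncomputable def acVal (h : List g.V) : ℤ :=
  sSup {z : ℤ | ∃ σ : g.Strat, g.aValH h ≤ g.aVal σ h ∧ z = g.cVal σ h}

/-- Weak dominance `σ ⪯ σ'` (from the initial vertex `v0`). -/
def Dom (σ σ' : g.Strat) : Prop :=
  ∀ τ : g.Strat, g.pval σ τ [g.v0] ≤ g.pval σ' τ [g.v0]

/-- Dominance `σ ≺ σ'`. -/
def SDom (σ σ' : g.Strat) : Prop :=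
  g.Dom σ σ' ∧ ∃ τ : g.Strat, g.pval σ τ [g.v0] < g.pval σ' τ [g.v0]

/-- Admissibility: `σ` is dominated by no strategy. -/
def Admissible (σ : g.Strat) : Prop := ¬ ∃ σ' : g.Strat, g.SDom σ σ'

/-- `h` is a witness of non-dominance of `σ₁` by `σ₂`. -/
def NonDomWitness (σ₁ σ₂ : g.Strat) (h : List g.V) : Prop :=
  g.Compat σ₁ h ∧ g.Compat σ₂ h ∧ g.protag (h.getLastD g.v0) ∧
    σ₁.act h ≠ σ₂.act h ∧ g.aVal σ₂ h < g.cVal σ₁ h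

/-- `h` is a witness of non-admissibility of `σ`. -/
def NonAdmWitness (σ : g.Strat) (h : List g.V) : Prop :=
  g.Compat σ h ∧
    g.aVal σ h ≤ g.cVal σ h ∧ g.cVal σ h ≤ g.aValH h ∧ g.aValH h ≤ g.acVal h ∧
    (g.aVal σ h < g.cVal σ h ∨ g.cVal σ h < g.aValH h ∨ g.aValH h < g.acVal h)

end GSRGame

/-- `σ` is preadmissible: every witness of non-admissibility `h` of `σ`, ending in some
vertex `v`, has a proper nonempty prefix `p` ending in the same vertex `v` with
`aVal(p, σ) = aVal(p)` and `cVal(p, σ) = acVal(p)`. -/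
def GSRGame.Preadmissible (g : GSRGame) (σ : g.Strat) : Prop :=
  ∀ h : List g.V, g.NonAdmWitness σ h →
    ∃ p : List g.V, p <+: h ∧ p ≠ h ∧ p ≠ [] ∧ p.getLastD g.v0 = h.getLastD g.v0 ∧
      g.aVal σ p = g.aValH p ∧ g.cVal σ p = g.acVal p

/-!
Fix an antagonist strategy `τ'`. If `σ` and `τ` produce different payoffs against `τ'`, the two
plays separate at a protagonist history `h` compatible with both. Letting the antagonist follow
`h` and then play best for `σ` after `σ`'s move at `h`, worst for `τ` after `τ`'s, dominance gives
`cVal(h, σ) ≤ aVal(h, τ)`, hence `aVal(h, σ) ≤ cVal(h, σ) ≤ aVal(h) ≤ acVal(h)`. Either these are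
equalities, or `h` witnesses non-admissibility and preadmissibility supplies a prefix of `h` with
the same last vertex where `σ` is optimal; since `aVal(h)` and `acVal(h)` only depend on the
last vertex of `h`, in both cases `aVal(h) ≤ aVal(h, σ)` and `acVal(h) ≤ cVal(v₀, σ)`. Therefore
`aVal(v₀, τ) ≤ aVal(h, τ) ≤ aVal(h, σ) ≤ p(σ, τ')` and `p(τ, τ') ≤ cVal(h, τ) ≤ cVal(v₀, σ)`,
and taking the infimum, resp. supremum, over `τ'` gives the reverse of the inequalities that
follow from `σ ⪯ τ`.
-/

theorem List.getLast_eq_getLastD_of_ne_nil {α : Type*} {l : List α} (hne : l ≠ []) (d : α) :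
    l.getLast hne = l.getLastD d := by
  simp [List.getLast?_eq_some_getLast hne]

namespace GSRGame

variable (g : GSRGame)

noncomputable instance : Inhabited g.Strat :=
  ⟨{ act := fun h => if hne : h = [] then g.v0 else (g.succ_exists (h.getLast hne)).choose
     valid := fun h hne => by
       simpa only [dif_neg hne] using (g.succ_exists (h.getLast hne)).choose_spec }⟩

section Play

variable (σ τ : g.Strat)

noncomputable def nextVertex (h : List g.V) : g.V :=
  if g.protag (h.getLastD g.v0) then σ.act h else τ.act h

theorem step_eq (h : List g.V) : g.step σ τ h = h ++ [g.nextVertex σ τ h] := rfl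

theorem step_of_protag {h : List g.V} (hp : g.protag (h.getLastD g.v0)) :
    g.step σ τ h = h ++ [σ.act h] := by
  rw [step_eq, nextVertex, if_pos hp]

theorem nextVertex_edge {h : List g.V} (hne : h ≠ []) :
    g.E (h.getLast hne) (g.nextVertex σ τ h) := by
  unfold nextVertex
  split_ifs
  exacts [σ.valid h hne, τ.valid h hne]

theorem playList_succ (h : List g.V) (k : ℕ) :
    g.playList σ τ h (k + 1) = g.step σ τ (g.playList σ τ h k) := rfl

theorem playList_add (h : List g.V) (m k : ℕ) :
    g.playList σ τ h (m + k) = g.playList σ τ (g.playList σ τ h m) k := by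
  induction k with
  | zero => rfl
  | succ k ih => rw [← Nat.add_assoc, playList_succ, ih, playList_succ]

theorem prefix_playList (h : List g.V) (k : ℕ) : h <+: g.playList σ τ h k := by
  induction k with
  | zero => exact List.prefix_refl h
  | succ k ih => exact ih.trans (List.prefix_append _ _)

theorem playList_ne_nil {h : List g.V} (hne : h ≠ []) (k : ℕ) : g.playList σ τ h k ≠ [] :=
  (g.prefix_playList σ τ h k).ne_nil hne

theorem play_succ (h : List g.V) (k : ℕ) :
    g.play σ τ h (k + 1) = g.nextVertex σ τ (g.playList σ τ h k) :=
  List.getLastD_concat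

theorem play_succ_of_leaf {h : List g.V} (hne : h ≠ []) {k : ℕ} (hl : g.leaf (g.play σ τ h k)) :
    g.play σ τ h (k + 1) = g.play σ τ h k := by
  have hk := g.playList_ne_nil σ τ hne k
  have hlast : g.play σ τ h k = (g.playList σ τ h k).getLast hk :=
    (List.getLast_eq_getLastD_of_ne_nil hk g.v0).symm
  rw [hlast] at hl ⊢
  rw [play_succ]
  exact (g.leaf_loop _ _ hl).mp (g.nextVertex_edge σ τ hk)

theorem eq_of_leaf_of_le {ρ : ℕ → g.V} (habs : ∀ k, g.leaf (ρ k) → ρ (k + 1) = ρ k) {k m : ℕ}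
    (hkm : k ≤ m) (hl : g.leaf (ρ k)) : ρ m = ρ k := by
  induction m, hkm using Nat.le_induction with
  | base => rfl
  | succ m _ ih => rw [habs m (ih ▸ hl), ih]

theorem payoffOf_shift {ρ : ℕ → g.V} (habs : ∀ k, g.leaf (ρ k) → ρ (k + 1) = ρ k) (n : ℕ) :
    g.payoffOf (fun k => ρ (n + k)) = g.payoffOf ρ := by
  unfold payoffOf
  by_cases hx : ∃ k, g.leaf (ρ k)
  · have hx' : ∃ k, g.leaf (ρ (n + k)) := by
      obtain ⟨k, hk⟩ := hx
      exact ⟨k, (g.eq_of_leaf_of_le habs (Nat.le_add_left k n) hk).symm ▸ hk⟩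
    rw [dif_pos hx, dif_pos hx']
    exact congrArg g.pay
      (g.eq_of_leaf_of_le habs (Nat.find_min' hx (Nat.find_spec hx')) (Nat.find_spec hx))
  · have hx' : ¬ ∃ k, g.leaf (ρ (n + k)) := fun ⟨k, hk⟩ => hx ⟨n + k, hk⟩
    rw [dif_neg hx, dif_neg hx']

theorem pval_playList {h : List g.V} (hne : h ≠ []) (n : ℕ) :
    g.pval σ τ (g.playList σ τ h n) = g.pval σ τ h := by
  have hplay : g.play σ τ (g.playList σ τ h n) = fun k => g.play σ τ h (n + k) :=
    funext fun k => by simp only [play, playList_add]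
  rw [pval, pval, hplay]
  exact g.payoffOf_shift (fun _ hl => g.play_succ_of_leaf σ τ hne hl) n

theorem pval_step {h : List g.V} (hne : h ≠ []) : g.pval σ τ (g.step σ τ h) = g.pval σ τ h :=
  g.pval_playList σ τ hne 1

theorem pval_congr {τ₁ τ₂ : g.Strat} {h : List g.V} (hag : ∀ x, h <+: x → τ₁.act x = τ₂.act x) :
    g.pval σ τ₁ h = g.pval σ τ₂ h := by
  have hplays : ∀ k, g.playList σ τ₁ h k = g.playList σ τ₂ h k := by
    intro k
    induction k with
    | zero => rfl
    | succ k ih =>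
      rw [playList_succ, playList_succ, ih, step_eq, step_eq, nextVertex, nextVertex,
        hag _ (g.prefix_playList σ τ₂ h k)]
  unfold pval
  congr 1
  funext k
  simp only [play, hplays]

end Play

section Compat

variable {g}

theorem compat_singleton (σ : g.Strat) : g.Compat σ [g.v0] := by
  refine ⟨List.cons_ne_nil _ _, rfl, List.isChain_singleton _, fun p v hpv hp _ => ?_⟩
  have hlen := hpv.length_le
  simp only [List.length_append, List.length_singleton] at hlen
  exact absurd (List.length_eq_zero_iff.mp (by omega)) hp

variable {σ : g.Strat} {h : List g.V}

theorem Compat.isChain (hc : g.Compat σ h) : h.IsChain g.E := hc.2.2.1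

theorem Compat.prefix (hc : g.Compat σ h) {p : List g.V} (hp : p <+: h) (hpne : p ≠ []) :
    g.Compat σ p := by
  obtain ⟨-, hhead, hch, hmoves⟩ := hc
  refine ⟨hpne, ?_, hch.prefix hp, fun q v hq => hmoves q v (hq.trans hp)⟩
  obtain ⟨t, rfl⟩ := hp
  simpa [List.head?_append, List.head?_eq_none_iff.not.mpr hpne] using hhead

theorem Compat.singleton_prefix (hc : g.Compat σ h) : [g.v0] <+: h := by
  obtain ⟨hne, hhead, -⟩ := hc
  obtain ⟨a, t, rfl⟩ := List.exists_cons_of_ne_nil hne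
  obtain rfl : a = g.v0 := by simpa using hhead
  exact ⟨t, rfl⟩

theorem Compat.step (τ : g.Strat) (hc : g.Compat σ h) : g.Compat σ (g.step σ τ h) := by
  obtain ⟨hne, hhead, hch, hmoves⟩ := hc
  rw [step_eq]
  refine ⟨by simp, by simp [hhead], hch.append (List.isChain_singleton _) ?_, ?_⟩
  · intro x hx y hy
    rw [List.getLast?_eq_some_getLast hne, Option.mem_some_iff] at hx
    rw [List.head?_singleton, Option.mem_some_iff] at hy
    exact hx ▸ hy ▸ g.nextVertex_edge σ τ hne
  · intro p v hpv hp hprot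
    rcases List.prefix_concat_iff.mp hpv with heq | hpre
    · obtain ⟨rfl, hv⟩ := List.append_inj' heq rfl
      rw [List.singleton_inj.mp hv, nextVertex, if_pos hprot]
    · exact hmoves p v hpre hp hprot

theorem Compat.playList (τ : g.Strat) (hc : g.Compat σ h) (k : ℕ) :
    g.Compat σ (g.playList σ τ h k) := by
  induction k with
  | zero => exact hc
  | succ k ih => exact ih.step τ

end Compat

def IsBranchPoint (σ τ : g.Strat) (h : List g.V) : Prop :=
  g.Compat σ h ∧ g.Compat τ h ∧ g.protag (h.getLastD g.v0) ∧ σ.act h ≠ τ.act h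

theorem exists_isBranchPoint_of_pval_ne {σ τ τ' : g.Strat}
    (hne : g.pval σ τ' [g.v0] ≠ g.pval τ τ' [g.v0]) :
    ∃ h, g.IsBranchPoint σ τ h ∧
      g.pval σ τ' h = g.pval σ τ' [g.v0] ∧ g.pval τ τ' h = g.pval τ τ' [g.v0] := by
  obtain ⟨n, hn, hprot, hact⟩ : ∃ n, g.playList σ τ' [g.v0] n = g.playList τ τ' [g.v0] n ∧
      g.protag ((g.playList σ τ' [g.v0] n).getLastD g.v0) ∧
      σ.act (g.playList σ τ' [g.v0] n) ≠ τ.act (g.playList σ τ' [g.v0] n) := by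
    by_contra hnone
    have hsame : ∀ n, g.playList σ τ' [g.v0] n = g.playList τ τ' [g.v0] n := by
      intro n
      induction n with
      | zero => rfl
      | succ n ih =>
        rw [playList_succ, playList_succ, ← ih, step_eq, step_eq, nextVertex, nextVertex]
        split_ifs with hp
        · rw [not_not.mp fun hact => hnone ⟨n, ih, hp, hact⟩]
        · rfl
    refine hne ?_
    unfold pval
    congr 1
    funext k
    simp only [play, hsame]
  have hv0 : ([g.v0] : List g.V) ≠ [] := List.cons_ne_nil _ _
  refine ⟨_, ⟨(g.compat_singleton σ).playList τ' n, hn ▸ (g.compat_singleton τ).playList τ' n,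
    hprot, hact⟩, g.pval_playList σ τ' hv0 n, hn ▸ g.pval_playList τ τ' hv0 n⟩

section Strategies

noncomputable def follow (h : List g.V) (hch : h.IsChain g.E) (τ' : g.Strat) : g.Strat where
  act x := if hx : x <+: h ∧ x.length < h.length then h[x.length] else τ'.act x
  valid x hne := by
    split_ifs with hx
    · obtain ⟨⟨t, rfl⟩, hlt⟩ := hx
      have ht : t ≠ [] := by rintro rfl; simp at hlt
      simpa [List.head_eq_getElem] using hch.rel_getLast_head_of_append hne ht
    · exact τ'.valid x hne

theorem follow_act_of_prefix {h : List g.V} (hch : h.IsChain g.E) (τ' : g.Strat) {x : List g.V}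
    (hx : h <+: x) : (g.follow h hch τ').act x = τ'.act x :=
  dif_neg fun ⟨_, hlt⟩ => (hx.length_le.trans_lt hlt).false

variable {g}

theorem playList_follow {σ : g.Strat} (τ' : g.Strat) {h : List g.V} (hc : g.Compat σ h) :
    ∀ n {y : List g.V}, y <+: h → y ≠ [] → h.length = y.length + n →
      g.playList σ (g.follow h hc.isChain τ') y n = h
  | 0, _, hy, _, hlen => hy.eq_of_length hlen.symm
  | n + 1, y, hy, hyne, hlen => by
    have hlt : y.length < h.length := by omega
    have hyv : y ++ [h[y.length]] <+: h := by
      obtain ⟨_ | ⟨a, t⟩, rfl⟩ := hy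
      · simp at hlt
      · simp
    have hstep : g.playList σ (g.follow h hc.isChain τ') y 1 = y ++ [h[y.length]] := by
      show g.step σ _ y = _
      rw [step_eq, nextVertex]
      split_ifs with hp
      · rw [hc.2.2.2 y _ hyv hyne hp]
      · simp only [follow, dif_pos (And.intro hy hlt)]
    rw [Nat.add_comm, playList_add, hstep]
    exact playList_follow τ' hc n hyv (by simp) (by simp; omega)

theorem pval_follow {σ : g.Strat} (τ' : g.Strat) {p h : List g.V} (hc : g.Compat σ h)
    (hp : p <+: h) (hpne : p ≠ []) :
    g.pval σ (g.follow h hc.isChain τ') p = g.pval σ τ' h := by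
  rw [← g.pval_playList σ _ hpne (h.length - p.length),
    playList_follow τ' hc _ hp hpne (by have := hp.length_le; omega)]
  exact g.pval_congr σ fun x hx => g.follow_act_of_prefix hc.isChain τ' hx

variable (g)

noncomputable def piecewise (c : List g.V) (τ₁ τ₂ : g.Strat) : g.Strat where
  act x := if c <+: x then τ₁.act x else τ₂.act x
  valid x hne := by
    split_ifs
    exacts [τ₁.valid x hne, τ₂.valid x hne]

end Strategies

section Values

/-- Every payoff lies in this finite set, so all the suprema and infima below are attained. -/
def payoffs : Set ℤ := insert 0 (Set.range g.pay)

theorem finite_payoffs : g.payoffs.Finite :=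
  haveI := g.fin
  (Set.finite_range g.pay).insert 0

variable (σ : g.Strat) (h : List g.V)

theorem pval_mem_payoffs (τ : g.Strat) : g.pval σ τ h ∈ g.payoffs := by
  unfold pval payoffOf
  split
  · exact Set.mem_insert_of_mem _ ⟨_, rfl⟩
  · exact Set.mem_insert _ _

def payoffSet : Set ℤ := {z | ∃ τ : g.Strat, z = g.pval σ τ h}

theorem payoffSet_nonempty : (g.payoffSet σ h).Nonempty := ⟨_, default, rfl⟩

theorem payoffSet_finite : (g.payoffSet σ h).Finite :=
  g.finite_payoffs.subset fun _ ⟨τ, hτ⟩ => hτ ▸ g.pval_mem_payoffs σ h τ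

theorem aVal_le_pval (τ : g.Strat) : g.aVal σ h ≤ g.pval σ τ h :=
  csInf_le (g.payoffSet_finite σ h).bddBelow ⟨τ, rfl⟩

theorem pval_le_cVal (τ : g.Strat) : g.pval σ τ h ≤ g.cVal σ h :=
  le_csSup (g.payoffSet_finite σ h).bddAbove ⟨τ, rfl⟩

theorem exists_aVal_eq_pval : ∃ τ : g.Strat, g.aVal σ h = g.pval σ τ h :=
  (g.payoffSet_nonempty σ h).csInf_mem (g.payoffSet_finite σ h)

theorem exists_cVal_eq_pval : ∃ τ : g.Strat, g.cVal σ h = g.pval σ τ h :=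
  (g.payoffSet_nonempty σ h).csSup_mem (g.payoffSet_finite σ h)

theorem aVal_le_cVal : g.aVal σ h ≤ g.cVal σ h :=
  (g.aVal_le_pval σ h default).trans (g.pval_le_cVal σ h default)

def aValSet : Set ℤ := {z | ∃ σ : g.Strat, z = g.aVal σ h}

def acValSet : Set ℤ := {z | ∃ σ : g.Strat, g.aValH h ≤ g.aVal σ h ∧ z = g.cVal σ h}

theorem aValSet_finite : (g.aValSet h).Finite :=
  g.finite_payoffs.subset fun _ ⟨σ, hσ⟩ =>
    have ⟨τ, hτ⟩ := g.exists_aVal_eq_pval σ h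
    hσ ▸ hτ ▸ g.pval_mem_payoffs σ h τ

theorem acValSet_finite : (g.acValSet h).Finite :=
  g.finite_payoffs.subset fun _ ⟨σ, _, hσ⟩ =>
    have ⟨τ, hτ⟩ := g.exists_cVal_eq_pval σ h
    hσ ▸ hτ ▸ g.pval_mem_payoffs σ h τ

theorem aVal_le_aValH : g.aVal σ h ≤ g.aValH h :=
  le_csSup (g.aValSet_finite h).bddAbove ⟨σ, rfl⟩

theorem cVal_le_acVal {σ : g.Strat} (hσ : g.aValH h ≤ g.aVal σ h) : g.cVal σ h ≤ g.acVal h :=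
  le_csSup (g.acValSet_finite h).bddAbove ⟨σ, hσ, rfl⟩

theorem aValH_le_acVal : g.aValH h ≤ g.acVal h := by
  obtain ⟨σ, hσ⟩ : g.aValH h ∈ g.aValSet h :=
    Set.Nonempty.csSup_mem ⟨_, default, rfl⟩ (g.aValSet_finite h)
  calc g.aValH h = g.aVal σ h := hσ
    _ ≤ g.cVal σ h := g.aVal_le_cVal σ h
    _ ≤ g.acVal h := g.cVal_le_acVal h hσ.le

end Values

section Prefix

variable {g} {σ : g.Strat} {p h : List g.V}

/-- From `p`, the antagonist can first follow `h`. -/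
theorem payoffSet_subset_of_prefix (hc : g.Compat σ h) (hp : p <+: h) (hpne : p ≠ []) :
    g.payoffSet σ h ⊆ g.payoffSet σ p :=
  fun _ ⟨τ', hτ'⟩ => ⟨g.follow h hc.isChain τ', hτ'.trans (pval_follow τ' hc hp hpne).symm⟩

theorem aVal_le_aVal_of_prefix (hc : g.Compat σ h) (hp : p <+: h) (hpne : p ≠ []) :
    g.aVal σ p ≤ g.aVal σ h :=
  csInf_le_csInf (g.payoffSet_finite σ p).bddBelow (g.payoffSet_nonempty σ h)
    (payoffSet_subset_of_prefix hc hp hpne)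

theorem cVal_le_cVal_of_prefix (hc : g.Compat σ h) (hp : p <+: h) (hpne : p ≠ []) :
    g.cVal σ h ≤ g.cVal σ p :=
  csSup_le_csSup (g.payoffSet_finite σ p).bddAbove (g.payoffSet_nonempty σ h)
    (payoffSet_subset_of_prefix hc hp hpne)

end Prefix

section Transfer

def SameLast (p h : List g.V) : Prop :=
  p ≠ [] ∧ h ≠ [] ∧ p.getLastD g.v0 = h.getLastD g.v0

variable {g} {p h : List g.V}

theorem SameLast.symm (hph : g.SameLast p h) : g.SameLast h p :=
  ⟨hph.2.1, hph.1, hph.2.2.symm⟩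

theorem SameLast.getLastD_append_drop (hph : g.SameLast p h) {x : List g.V} (hx : h <+: x) :
    (p ++ x.drop h.length).getLastD g.v0 = x.getLastD g.v0 := by
  obtain ⟨t, rfl⟩ := hx
  have hlast := hph.2.2
  simp only [List.getLastD_eq_getLast?] at hlast
  simp only [List.drop_left, List.getLastD_eq_getLast?, List.getLast?_append]
  cases t.getLast? <;> simp [hlast]

variable (g)

/-- From `h`, play as `σ` plays from `p`; meaningful only when `p` and `h` end in the same
vertex. -/
noncomputable def transfer (p h : List g.V) (σ : g.Strat) : g.Strat where
  act x := if h <+: x ∧ g.SameLast p h then σ.act (p ++ x.drop h.length)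
    else (default : g.Strat).act x
  valid x hne := by
    split_ifs with hx
    · have hne' : p ++ x.drop h.length ≠ [] := by simp [hx.2.1]
      have hedge := σ.valid _ hne'
      rwa [List.getLast_eq_getLastD_of_ne_nil hne' g.v0, hx.2.getLastD_append_drop hx.1,
        ← List.getLast_eq_getLastD_of_ne_nil hne] at hedge
    · exact (default : g.Strat).valid x hne

variable {g}

theorem transfer_act (hph : g.SameLast p h) (σ : g.Strat) {x : List g.V} (hx : h <+: x) :
    (g.transfer p h σ).act x = σ.act (p ++ x.drop h.length) :=
  if_pos ⟨hx, hph⟩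

theorem playList_transfer (hph : g.SameLast p h) (σ τ : g.Strat) (k : ℕ) :
    g.playList (g.transfer p h σ) τ h k =
      h ++ (g.playList σ (g.transfer h p τ) p k).drop p.length := by
  induction k with
  | zero => simp [playList]
  | succ k ih =>
    set y := g.playList σ (g.transfer h p τ) p k
    have hpy : p <+: y := g.prefix_playList σ _ p k
    set x := h ++ y.drop p.length
    have hhx : h <+: x := List.prefix_append _ _
    have hxy : p ++ x.drop h.length = y := by
      rw [List.drop_left]
      exact List.prefix_iff_eq_append.mp hpy
    have hlast : x.getLastD g.v0 = y.getLastD g.v0 := by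
      rw [← hph.symm.getLastD_append_drop hpy]
    have hnext : g.nextVertex (g.transfer p h σ) τ x = g.nextVertex σ (g.transfer h p τ) y := by
      rw [nextVertex, nextVertex, hlast, transfer_act hph σ hhx, hxy,
        transfer_act hph.symm τ hpy]
    rw [playList_succ, playList_succ, ih, step_eq, step_eq, hnext,
      List.drop_append_of_le_length hpy.length_le, ← List.append_assoc]

theorem pval_transfer (hph : g.SameLast p h) (σ τ : g.Strat) :
    g.pval (g.transfer p h σ) τ h = g.pval σ (g.transfer h p τ) p := by
  unfold pval
  congr 1
  funext k
  rw [play, play, playList_transfer hph,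
    hph.symm.getLastD_append_drop (g.prefix_playList σ _ p k)]

theorem payoffSet_transfer (hph : g.SameLast p h) (σ : g.Strat) :
    g.payoffSet (g.transfer p h σ) h = g.payoffSet σ p := by
  ext z
  constructor
  · rintro ⟨τ, rfl⟩
    exact ⟨g.transfer h p τ, pval_transfer hph σ τ⟩
  · rintro ⟨τ, rfl⟩
    refine ⟨g.transfer p h τ, ((pval_transfer hph σ _).trans (g.pval_congr σ fun x hx => ?_)).symm⟩
    rw [transfer_act hph.symm _ hx, transfer_act hph τ (List.prefix_append h _), List.drop_left,
      List.prefix_iff_eq_append.mp hx]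

theorem aVal_transfer (hph : g.SameLast p h) (σ : g.Strat) :
    g.aVal (g.transfer p h σ) h = g.aVal σ p :=
  congrArg sInf (payoffSet_transfer hph σ)

theorem cVal_transfer (hph : g.SameLast p h) (σ : g.Strat) :
    g.cVal (g.transfer p h σ) h = g.cVal σ p :=
  congrArg sSup (payoffSet_transfer hph σ)

theorem aValSet_subset_of_sameLast (hph : g.SameLast p h) : g.aValSet p ⊆ g.aValSet h :=
  fun _ ⟨σ, hσ⟩ => ⟨g.transfer p h σ, hσ.trans (aVal_transfer hph σ).symm⟩

theorem aValH_eq_of_sameLast (hph : g.SameLast p h) : g.aValH p = g.aValH h :=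
  congrArg sSup ((aValSet_subset_of_sameLast hph).antisymm (aValSet_subset_of_sameLast hph.symm))

theorem acValSet_subset_of_sameLast (hph : g.SameLast p h) : g.acValSet p ⊆ g.acValSet h :=
  fun _ ⟨σ, hσ, hz⟩ => ⟨g.transfer p h σ,
    (aValH_eq_of_sameLast hph).symm.trans_le (hσ.trans (aVal_transfer hph σ).ge),
    hz.trans (cVal_transfer hph σ).symm⟩

theorem acVal_eq_of_sameLast (hph : g.SameLast p h) : g.acVal p = g.acVal h :=
  congrArg sSup ((acValSet_subset_of_sameLast hph).antisymm (acValSet_subset_of_sameLast hph.symm))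

end Transfer

section Dominance

variable {g} {σ τ : g.Strat}

theorem Dom.aVal_le (hdom : g.Dom σ τ) : g.aVal σ [g.v0] ≤ g.aVal τ [g.v0] :=
  le_csInf (g.payoffSet_nonempty τ _) fun _ ⟨τ', hτ'⟩ =>
    hτ' ▸ (g.aVal_le_pval σ _ τ').trans (hdom τ')

theorem Dom.cVal_le (hdom : g.Dom σ τ) : g.cVal σ [g.v0] ≤ g.cVal τ [g.v0] :=
  csSup_le (g.payoffSet_nonempty σ _) fun _ ⟨τ', hτ'⟩ =>
    hτ' ▸ (hdom τ').trans (g.pval_le_cVal τ _ τ')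

theorem Dom.cVal_le_aVal_of_isBranchPoint (hdom : g.Dom σ τ) {h : List g.V}
    (hb : g.IsBranchPoint σ τ h) : g.cVal σ h ≤ g.aVal τ h := by
  obtain ⟨hcσ, hcτ, hprot, hact⟩ := hb
  obtain ⟨τmax, hmax⟩ := g.exists_cVal_eq_pval σ h
  obtain ⟨τmin, hmin⟩ := g.exists_aVal_eq_pval τ h
  let γ := g.piecewise (h ++ [σ.act h]) τmax τmin
  have hv0 : ([g.v0] : List g.V) ≠ [] := List.cons_ne_nil _ _
  have hσ : g.pval σ (g.follow h hcσ.isChain γ) [g.v0] = g.cVal σ h := by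
    rw [pval_follow γ hcσ hcσ.singleton_prefix hv0, hmax, ← g.pval_step σ γ hcσ.1,
      ← g.pval_step σ τmax hcσ.1, g.step_of_protag σ γ hprot, g.step_of_protag σ τmax hprot]
    exact g.pval_congr σ fun x hx => if_pos hx
  have hτ : g.pval τ (g.follow h hcσ.isChain γ) [g.v0] = g.aVal τ h := by
    rw [pval_follow γ hcτ hcτ.singleton_prefix hv0, hmin, ← g.pval_step τ γ hcτ.1,
      ← g.pval_step τ τmin hcτ.1, g.step_of_protag τ γ hprot, g.step_of_protag τ τmin hprot]
    refine g.pval_congr τ fun x hx => if_neg fun hσx => hact ?_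
    simpa using (List.prefix_of_prefix_length_le hσx hx (by simp)).eq_of_length (by simp)
  exact hσ ▸ hτ ▸ hdom _

end Dominance

section Preadmissible

variable {g} {σ τ : g.Strat}

theorem Preadmissible.exists_optimal_prefix (hpre : g.Preadmissible σ) {h : List g.V}
    (hc : g.Compat σ h) (hle : g.cVal σ h ≤ g.aValH h) :
    ∃ p, p <+: h ∧ p ≠ [] ∧ g.aVal σ p = g.aValH h ∧ g.cVal σ p = g.acVal h := by
  by_cases hstrict : g.aVal σ h < g.cVal σ h ∨ g.cVal σ h < g.aValH h ∨ g.aValH h < g.acVal h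
  · obtain ⟨p, hp, -, hpne, hlast, ha, hcv⟩ :=
      hpre h ⟨hc, g.aVal_le_cVal σ h, hle, g.aValH_le_acVal h, hstrict⟩
    have hph : g.SameLast p h := ⟨hpne, hc.1, hlast⟩
    exact ⟨p, hp, hpne, ha.trans (aValH_eq_of_sameLast hph),
      hcv.trans (acVal_eq_of_sameLast hph)⟩
  · push Not at hstrict
    have := g.aVal_le_cVal σ h
    have := g.aValH_le_acVal h
    exact ⟨h, List.prefix_refl h, hc.1, by omega, by omega⟩

theorem Preadmissible.aVal_le_and_cVal_le_of_isBranchPoint (hpre : g.Preadmissible σ) (hdom : g.Dom σ τ)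
    {h : List g.V} (hb : g.IsBranchPoint σ τ h) :
    g.aVal τ h ≤ g.aVal σ h ∧ g.cVal τ h ≤ g.cVal σ [g.v0] := by
  have hστ := hdom.cVal_le_aVal_of_isBranchPoint hb
  have hτ := g.aVal_le_aValH τ h
  obtain ⟨p, hp, hpne, ha, hcv⟩ := hpre.exists_optimal_prefix hb.1 (hστ.trans hτ)
  have hopt : g.aValH h ≤ g.aVal σ h := ha ▸ aVal_le_aVal_of_prefix hb.1 hp hpne
  have hcp := hb.1.prefix hp hpne
  refine ⟨hτ.trans hopt, ?_⟩
  calc g.cVal τ h ≤ g.acVal h := g.cVal_le_acVal h (hopt.trans ((g.aVal_le_cVal σ h).trans hστ))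
    _ = g.cVal σ p := hcv.symm
    _ ≤ g.cVal σ [g.v0] :=
      cVal_le_cVal_of_prefix hcp hcp.singleton_prefix (List.cons_ne_nil _ _)

theorem Preadmissible.aVal_le_pval (hpre : g.Preadmissible σ) (hdom : g.Dom σ τ)
    (τ' : g.Strat) : g.aVal τ [g.v0] ≤ g.pval σ τ' [g.v0] := by
  by_cases heq : g.pval σ τ' [g.v0] = g.pval τ τ' [g.v0]
  · exact heq ▸ g.aVal_le_pval τ _ τ'
  obtain ⟨h, hb, hσ, -⟩ := g.exists_isBranchPoint_of_pval_ne heq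
  calc g.aVal τ [g.v0] ≤ g.aVal τ h :=
        aVal_le_aVal_of_prefix hb.2.1 hb.2.1.singleton_prefix (List.cons_ne_nil _ _)
    _ ≤ g.aVal σ h := (hpre.aVal_le_and_cVal_le_of_isBranchPoint hdom hb).1
    _ ≤ g.pval σ τ' h := g.aVal_le_pval σ h τ'
    _ = g.pval σ τ' [g.v0] := hσ

theorem Preadmissible.pval_le_cVal (hpre : g.Preadmissible σ) (hdom : g.Dom σ τ)
    (τ' : g.Strat) : g.pval τ τ' [g.v0] ≤ g.cVal σ [g.v0] := by
  by_cases heq : g.pval σ τ' [g.v0] = g.pval τ τ' [g.v0]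
  · exact heq ▸ g.pval_le_cVal σ _ τ'
  obtain ⟨h, hb, -, hτ⟩ := g.exists_isBranchPoint_of_pval_ne heq
  calc g.pval τ τ' [g.v0] = g.pval τ τ' h := hτ.symm
    _ ≤ g.cVal τ h := g.pval_le_cVal τ h τ'
    _ ≤ g.cVal σ [g.v0] := (hpre.aVal_le_and_cVal_le_of_isBranchPoint hdom hb).2

end Preadmissible

end GSRGame

/-- if `σ` is preadmissible and `σ ⪯ τ`, then `aVal(v₀, σ) = aVal(v₀, τ)` and
`cVal(v₀, σ) = cVal(v₀, τ)`. -/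
theorem stmt17 (g : GSRGame) (σ τ : g.Strat)
    (hpre : g.Preadmissible σ) (hdom : g.Dom σ τ) :
    g.aVal σ [g.v0] = g.aVal τ [g.v0] ∧ g.cVal σ [g.v0] = g.cVal τ [g.v0] :=
  ⟨hdom.aVal_le.antisymm <| le_csInf (g.payoffSet_nonempty σ _) fun _ ⟨τ', hτ'⟩ =>
      hτ' ▸ hpre.aVal_le_pval hdom τ',
    hdom.cVal_le.antisymm <| csSup_le (g.payoffSet_nonempty τ _) fun _ ⟨τ', hτ'⟩ =>
      hτ' ▸ hpre.pval_le_cVal hdom τ'⟩
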